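/- arXiv:1909.00443 — 3 statements merged into one kernel-verified Lean document; each statement's English description precedes it below -/
import Mathlib

section
/- Let d ≥ 0 and let σ ∈ Σ_d be a permutation with c(σ) cycles (fixed points counted as cycles). Then applying the contraction map d times to the basis element [σ] ∈ 𝒵_d gives ∂^d([σ]) = t^{c(σ)} in 𝒵_0 = K[t]. Consequently, for a = Σ_{σ ∈ Σ_d} f_σ·[σ] ∈ 𝒵_d with f_σ ∈ K[t], one has ∂^d(a) = Σ_{σ ∈ Σ_d} f_σ·t^{c(σ)}. -/
open Polynomial

/-- `𝒵_n = K[t][Σ_n]`, the group algebra of the symmetric group on `n` letters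
over the polynomial ring `K[t]`. -/
abbrev Zn (K : Type) [Field K] (n : ℕ) : Type :=
  MonoidAlgebra (Polynomial K) (Equiv.Perm (Fin n))

/-- `KΣ_n`, the group algebra of the symmetric group over `K`. -/
abbrev GA (K : Type) [Field K] (n : ℕ) : Type :=
  MonoidAlgebra K (Equiv.Perm (Fin n))

/-- The basis element `[σ]` of `𝒵_n`. -/
noncomputable def zbasis {K : Type} [Field K] {n : ℕ} (σ : Equiv.Perm (Fin n)) : Zn K n :=
  MonoidAlgebra.single σ 1

/-- For `σ ∈ Σ_{n+1}`, the permutation `τ ∈ Σ_n` with `τ (σ⁻¹ n) = σ n` and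
`τ k = σ k` for all other `k`; if `σ` fixes the last point this is the
restriction of `σ`. -/
def reduceLast {n : ℕ} (σ : Equiv.Perm (Fin (n + 1))) : Equiv.Perm (Fin n) :=
  Equiv.removeNone (finSuccEquivLast.permCongr σ)

/-- The contraction `∂ : 𝒵_{n+1} → 𝒵_n`: the `K[t]`-linear map with
`∂[σ] = t·[σ']` if `σ` fixes the last point (`σ'` the restriction) and
`∂[σ] = [reduceLast σ]` otherwise. -/
noncomputable def contractZ {K : Type} [Field K] {n : ℕ} (a : Zn K (n + 1)) : Zn K n :=
  Finsupp.sum a.coeff fun σ f =>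
    MonoidAlgebra.single (reduceLast σ)
      ((if σ (Fin.last n) = Fin.last n then (X : Polynomial K) else 1) * f)

/-- `σ ⊕ τ ∈ Σ_{p+q}`: acts as `σ` on the first `p` letters and as the
shift of `τ` on the last `q` letters. -/
def permShift {p q : ℕ} (σ : Equiv.Perm (Fin p)) (τ : Equiv.Perm (Fin q)) :
    Equiv.Perm (Fin (p + q)) :=
  finSumFinEquiv.permCongr (Equiv.sumCongr σ τ)

/-- The tensor product `⊗ : 𝒵_p × 𝒵_q → 𝒵_{p+q}`, the `K[t]`-bilinear map with
`[σ] ⊗ [τ] = [σ ⊕ τ]`. -/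
noncomputable def ztensor {K : Type} [Field K] {p q : ℕ} (a : Zn K p) (b : Zn K q) :
    Zn K (p + q) :=
  Finsupp.sum a.coeff fun σ f => Finsupp.sum b.coeff fun τ g =>
    MonoidAlgebra.single (permShift σ τ) (f * g)

/-- An ideal of the wheeled PROP `𝒵`: a family `I_n ⊆ 𝒵_n` such that each `I_n` is a
two-sided ideal of the ring `K[t][Σ_n]`, closed under tensoring (on either side) with
arbitrary elements, and closed under contraction. -/
structure ZIdeal (K : Type) [Field K] where
  carrier : ∀ n : ℕ, Set (Zn K n)
  zero_mem : ∀ n : ℕ, (0 : Zn K n) ∈ carrier n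
  add_mem : ∀ (n : ℕ) (a b : Zn K n), a ∈ carrier n → b ∈ carrier n → a + b ∈ carrier n
  neg_mem : ∀ (n : ℕ) (a : Zn K n), a ∈ carrier n → -a ∈ carrier n
  mul_mem_left : ∀ (n : ℕ) (r a : Zn K n), a ∈ carrier n → r * a ∈ carrier n
  mul_mem_right : ∀ (n : ℕ) (r a : Zn K n), a ∈ carrier n → a * r ∈ carrier n
  tensor_mem_left : ∀ (p q : ℕ) (a : Zn K p) (b : Zn K q),
    a ∈ carrier p → ztensor a b ∈ carrier (p + q)
  tensor_mem_right : ∀ (p q : ℕ) (a : Zn K p) (b : Zn K q),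
    a ∈ carrier p → ztensor b a ∈ carrier (q + p)
  contract_mem : ∀ (n : ℕ) (a : Zn K (n + 1)), a ∈ carrier (n + 1) → contractZ a ∈ carrier n

/-- A nonzero ideal of `𝒵`. -/
def ZIdeal.Nonzero {K : Type} [Field K] (I : ZIdeal K) : Prop :=
  ∃ (d : ℕ) (a : Zn K d), a ∈ I.carrier d ∧ a ≠ 0

/-- A standard Young tableau of shape `μ` with entries in `Fin n`:
a bijection from the cells of `μ` to `Fin n` (thought of as the entries `1,…,n`)
that increases along rows and columns.  (Coordinates of cells are 0-indexed,
in matrix convention: `(i, j)` is row `i`, column `j`.) -/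
structure SYT (μ : YoungDiagram) (n : ℕ) where
  toEquiv : {c : ℕ × ℕ // c ∈ μ} ≃ Fin n
  row_lt : ∀ c d : {c : ℕ × ℕ // c ∈ μ},
    c.1.1 = d.1.1 → c.1.2 < d.1.2 → toEquiv c < toEquiv d
  col_lt : ∀ c d : {c : ℕ × ℕ // c ∈ μ},
    c.1.2 = d.1.2 → c.1.1 < d.1.1 → toEquiv c < toEquiv d

/-- `σ` belongs to the row stabilizer `R(T)` of the tableau `T`. -/
def isRowStab {μ : YoungDiagram} {n : ℕ} (T : SYT μ n) (σ : Equiv.Perm (Fin n)) : Prop :=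
  ∀ k : Fin n, (T.toEquiv.symm (σ k)).1.1 = (T.toEquiv.symm k).1.1

/-- `σ` belongs to the column stabilizer `C(T)` of the tableau `T`. -/
def isColStab {μ : YoungDiagram} {n : ℕ} (T : SYT μ n) (σ : Equiv.Perm (Fin n)) : Prop :=
  ∀ k : Fin n, (T.toEquiv.symm (σ k)).1.2 = (T.toEquiv.symm k).1.2

open Classical in
/-- The Young symmetrizer `y_T = Σ_{σ ∈ R(T), π ∈ C(T)} sgn(π)·[π σ]`, with
coefficients in a commutative ring `R`. -/
noncomputable def ySym (R : Type) [CommRing R] {μ : YoungDiagram} {n : ℕ} (T : SYT μ n) :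
    MonoidAlgebra R (Equiv.Perm (Fin n)) :=
  ∑ σ : Equiv.Perm (Fin n), ∑ π : Equiv.Perm (Fin n),
    if isRowStab T σ ∧ isColStab T π then
      MonoidAlgebra.single (π * σ) (((Equiv.Perm.sign π : ℤ) : R))
    else 0

/-- The two-sided span `A·S·A` of a subset `S` of a `K`-algebra `A`,
as a `K`-subspace. -/
noncomputable def twoSidedSpan {K : Type} [Field K] {A : Type} [Ring A] [Algebra K A]
    (S : Set A) : Submodule K A :=
  Submodule.span K {x | ∃ a b : A, ∃ s ∈ S, x = a * s * b}

/-- The simple two-sided ideal `J_λ = KΣ_n · y_T · KΣ_n ⊆ KΣ_n` attached to a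
partition (Young diagram) `μ`; it does not depend on the choice of a standard
Young tableau `T` of shape `μ`, so we take the supremum over all of them. -/
noncomputable def Jideal (K : Type) [Field K] (n : ℕ) (μ : YoungDiagram) :
    Submodule K (GA K n) :=
  ⨆ T : SYT μ n, twoSidedSpan {ySym K T}

/-- The embedding `KΣ_n → K[t][Σ_n]` (coefficientwise `K → K[t]`). -/
noncomputable def embZ (K : Type) [Field K] (n : ℕ) : GA K n →ₗ[K] Zn K n :=
  (MonoidAlgebra.coeffLinearEquiv K).symm.toLinearMap ∘ₗ
    Finsupp.mapRange.linearMap (Algebra.linearMap K (Polynomial K)) ∘ₗ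
      (MonoidAlgebra.coeffLinearEquiv K).toLinearMap

/-- `J_λ`, regarded inside `𝒵_n = K[t][Σ_n]` (as a `K`-subspace). -/
noncomputable def JZ (K : Type) [Field K] (n : ℕ) (μ : YoungDiagram) :
    Submodule K (Zn K n) :=
  Submodule.map (embZ K n) (Jideal K n μ)

/-- `L·J_λ ⊆ 𝒵_n`: the `K`-span of products `f • x` with `f ∈ L ⊆ K[t]`, `x ∈ J_λ`. -/
noncomputable def LJ (K : Type) [Field K] (n : ℕ) (L : Ideal (Polynomial K))
    (μ : YoungDiagram) : Submodule K (Zn K n) :=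
  Submodule.span K {x | ∃ f ∈ L, ∃ y ∈ JZ K n μ, x = f • y}

/-- The partitions of `n`, as Young diagrams with `n` cells. -/
def Par (n : ℕ) : Type := {μ : YoungDiagram // μ.card = n}

/-- `I_n` decomposes as the direct sum `⊕_{λ ⊢ n} L_λ·J_λ`. -/
def IsDecomp (K : Type) [Field K] (n : ℕ) (S : Set (Zn K n))
    (L : Par n → Ideal (Polynomial K)) : Prop :=
  S = ↑(⨆ μ : Par n, LJ K n (L μ) μ.1) ∧ iSupIndep fun μ : Par n => LJ K n (L μ) μ.1

/-- For a monic `f ∈ K[t]` and a finite set `C` of boxes, the polynomial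
`g_λ = f · ∏_{(i,j) ∈ C, (i,j) ∉ λ} (t + j − i)`. -/
noncomputable def gOf (K : Type) [Field K] (f : Polynomial K) (C : Finset (ℕ × ℕ))
    (μ : YoungDiagram) : Polynomial K :=
  f * ∏ c ∈ C.filter (fun c => c ∉ μ), ((X : Polynomial K) + (c.2 : Polynomial K) - (c.1 : Polynomial K))

/-- The `n`-th piece of the ideal `I(f, C)` of `𝒵`:
`I(f,C)_n = ⊕_{λ ⊢ n} (g_λ)·J_λ`. -/
noncomputable def IfcCarrier (K : Type) [Field K] (f : Polynomial K) (C : Finset (ℕ × ℕ))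
    (n : ℕ) : Set (Zn K n) :=
  ↑(⨆ μ : Par n, LJ K n (Ideal.span {gOf K f C μ.1}) μ.1)

-- statement 0 extras
/-- The number of cycles of `σ`, counting fixed points as cycles. -/
def cycleCount {d : ℕ} (σ : Equiv.Perm (Fin d)) : ℕ :=
  σ.cycleType.card + (d - σ.cycleType.sum)

/-- The `d`-fold contraction `∂^d : 𝒵_d → 𝒵_0`. -/
noncomputable def contractIter (K : Type) [Field K] : (d : ℕ) → Zn K d → Zn K 0
  | 0, a => a
  | d + 1, a => contractIter K d (contractZ a)


/-!
Contracting `[σ]` at the last letter either removes a fixed point, producing a factor `t`, or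
deletes that letter from its cycle. To count cycles, view `σ` as a permutation `π` of
`Option (Fin n)`: then `(removeNone π).optionCongr = swap none (π none) * π`, and for `f x ≠ x`
left multiplication by `swap x (f x)` splits `x` off its cycle as a new fixed point, adding
exactly one cycle. So a contraction lowers the cycle count by one exactly when it produces a
factor `t`, and after `d` contractions `t ^ c(σ)` remains.
-/

namespace Equiv.Perm

variable {α β : Type*} [Fintype α] [DecidableEq α] [Fintype β] [DecidableEq β]

-- `Fintype.card α - f.cycleType.sum` counts the fixed points.
def numCycles (f : Perm α) : ℕ :=
  Multiset.card f.cycleType + (Fintype.card α - f.cycleType.sum)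

theorem IsCycle.numCycles {c : Perm α} (hc : c.IsCycle) :
    c.numCycles = 1 + (Fintype.card α - c.support.card) := by
  simp [Perm.numCycles, hc.cycleType]

theorem Disjoint.numCycles_mul {f g : Perm α} (h : Disjoint f g) :
    (f * g).numCycles + Fintype.card α = f.numCycles + g.numCycles := by
  have hle := (f * g).sum_cycleType_le
  simp only [Perm.numCycles, h.cycleType_mul, Multiset.card_add, Multiset.sum_add] at hle ⊢
  omega

theorem IsCycle.numCycles_swap_mul {c : Perm α} (hc : c.IsCycle) {x : α} (hx : c x ≠ x) :
    (swap x (c x) * c).numCycles = c.numCycles + 1 := by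
  have hcard := Finset.card_le_univ c.support
  by_cases hccx : c (c x) = x
  · have hswap : c = swap x (c x) := hc.eq_swap_of_apply_apply_eq_self hx hccx
    have hone : swap x (c x) * c = 1 := by
      rw [mul_eq_one_iff_inv_eq, swap_inv]
      exact hswap.symm
    have htwo : c.support.card = 2 := by
      rw [hswap]
      exact card_support_swap hx.symm
    rw [hone, hc.numCycles, htwo]
    simp only [Perm.numCycles, cycleType_one, Multiset.card_zero, Multiset.sum_zero]
    omega
  · have hx_mem : x ∈ c.support := mem_support.mpr hx
    have hsupp : (swap x (c x) * c).support.card = c.support.card - 1 := by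
      rw [support_swap_mul_eq c x hccx,
        Finset.card_sdiff_of_subset (Finset.singleton_subset_iff.mpr hx_mem), Finset.card_singleton]
    rw [(hc.swap_mul hx hccx).numCycles, hc.numCycles, hsupp]
    have := hc.two_le_card_support
    omega

theorem numCycles_swap_mul {f : Perm α} {x : α} (hx : f x ≠ x) :
    (swap x (f x) * f).numCycles = f.numCycles + 1 := by
  set c := f.cycleOf x
  have hc : c.IsCycle := isCycle_cycleOf f hx
  have hcx : c x = f x := cycleOf_apply_self f x
  have hdisj : Disjoint (f * c⁻¹) c :=
    disjoint_mul_inv_of_mem_cycleFactorsFinset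
      (cycleOf_mem_cycleFactorsFinset_iff.mpr (mem_support.mpr hx))
  have hf : f = c * (f * c⁻¹) := by rw [hdisj.symm.commute.eq, inv_mul_cancel_right]
  have hdisj' : Disjoint (swap x (c x) * c) (f * c⁻¹) :=
    hdisj.symm.mono (fun y hy => (mem_support_swap_mul_imp_mem_support_ne hy).1) le_rfl
  have key := hdisj'.numCycles_mul
  rw [mul_assoc, ← hf, hc.numCycles_swap_mul (hcx ▸ hx), hcx] at key
  have := hdisj.symm.numCycles_mul
  rw [← hf] at this
  omega

theorem cycleType_permCongr (e : α ≃ β) (g : Perm α) :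
    (e.permCongr g).cycleType = g.cycleType := by
  have h : e.permCongr g = g.extendDomain
      (e.trans (subtypeUnivEquiv (p := fun _ : β => True) fun _ => trivial).symm) := by
    ext b
    rw [extendDomain_apply_subtype _ _ trivial]
    simp [subtypeUnivEquiv]
  rw [h, cycleType_extendDomain]

theorem numCycles_permCongr (e : α ≃ β) (g : Perm α) :
    (e.permCongr g).numCycles = g.numCycles := by
  simp only [Perm.numCycles, cycleType_permCongr, Fintype.card_congr e]

theorem cycleType_optionCongr (g : Perm α) : Perm.cycleType (optionCongr g) = g.cycleType := by
  have h : g.optionCongr = g.extendDomain (optionIsSomeEquiv α).symm := by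
    ext (_ | a)
    · rw [extendDomain_apply_not_subtype _ _ (by simp)]
      rfl
    · rw [extendDomain_apply_subtype _ _ (by simp)]
      simp [optionIsSomeEquiv]
  rw [h, cycleType_extendDomain]

theorem numCycles_optionCongr (g : Perm α) : Perm.numCycles (optionCongr g) = g.numCycles + 1 := by
  have := g.sum_cycleType_le
  simp only [Perm.numCycles, cycleType_optionCongr, Fintype.card_option]
  omega

theorem numCycles_removeNone (π : Perm (Option α)) :
    π.numCycles = Perm.numCycles (removeNone π) + if π none = none then 1 else 0 := by
  have h := numCycles_optionCongr (removeNone π)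
  rw [map_equiv_removeNone] at h
  split_ifs with hnone
  · rw [hnone, swap_self, ← one_def, one_mul] at h
    omega
  · rw [numCycles_swap_mul hnone] at h
    omega

end Equiv.Perm

theorem cycleCount_eq_numCycles {n : ℕ} (σ : Equiv.Perm (Fin n)) :
    cycleCount σ = σ.numCycles := by
  simp only [cycleCount, Equiv.Perm.numCycles, Fintype.card_fin]

theorem cycleCount_reduceLast {n : ℕ} (σ : Equiv.Perm (Fin (n + 1))) :
    cycleCount σ =
      cycleCount (reduceLast σ) + if σ (Fin.last n) = Fin.last n then 1 else 0 := by
  have hnone : finSuccEquivLast.permCongr σ none = none ↔ σ (Fin.last n) = Fin.last n := by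
    rw [Equiv.permCongr_apply, finSuccEquivLast_symm_none, ← finSuccEquivLast_last,
      Equiv.apply_eq_iff_eq]
  rw [cycleCount_eq_numCycles, cycleCount_eq_numCycles, reduceLast,
    ← Equiv.Perm.numCycles_permCongr finSuccEquivLast, Equiv.Perm.numCycles_removeNone]
  simp only [hnone]

section Contraction

variable {K : Type} [Field K]

theorem contractZ_single {n : ℕ} (σ : Equiv.Perm (Fin (n + 1))) (f : K[X]) :
    contractZ (MonoidAlgebra.single σ f) =
      MonoidAlgebra.single (reduceLast σ)
        ((if σ (Fin.last n) = Fin.last n then X else 1) * f) := by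
  rw [contractZ, MonoidAlgebra.coeff_single]
  exact Finsupp.sum_single_index (by simp)

theorem contractZ_add {n : ℕ} (a b : Zn K (n + 1)) :
    contractZ (a + b) = contractZ a + contractZ b := by
  rw [contractZ, MonoidAlgebra.coeff_add]
  exact Finsupp.sum_add_index' (fun _ => by simp)
    (fun _ _ _ => by rw [mul_add, MonoidAlgebra.single_add])

theorem contractIter_add (d : ℕ) (a b : Zn K d) :
    contractIter K d (a + b) = contractIter K d a + contractIter K d b := by
  induction d with
  | zero => rfl
  | succ d ih => exact (congrArg _ (contractZ_add a b)).trans (ih _ _)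

theorem contractIter_single (d : ℕ) (σ : Equiv.Perm (Fin d)) (f : K[X]) :
    contractIter K d (MonoidAlgebra.single σ f) =
      MonoidAlgebra.single (1 : Equiv.Perm (Fin 0)) (f * X ^ cycleCount σ) := by
  induction d generalizing f with
  | zero =>
    obtain rfl : σ = 1 := Subsingleton.elim _ _
    simp [contractIter, cycleCount]
  | succ d ih =>
    rw [contractIter, contractZ_single, ih, cycleCount_reduceLast σ]
    congr 1
    split_ifs <;> ring

end Contraction

theorem stmt0_general (K : Type) [Field K] (d : ℕ) :
    (∀ σ : Equiv.Perm (Fin d),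
      contractIter K d (zbasis σ) =
        MonoidAlgebra.single (1 : Equiv.Perm (Fin 0)) ((X : Polynomial K) ^ cycleCount σ)) ∧
    (∀ f : Equiv.Perm (Fin d) → Polynomial K,
      contractIter K d (∑ σ : Equiv.Perm (Fin d), MonoidAlgebra.single σ (f σ)) =
        MonoidAlgebra.single (1 : Equiv.Perm (Fin 0))
          (∑ σ : Equiv.Perm (Fin d), f σ * (X : Polynomial K) ^ cycleCount σ)) := by
  refine ⟨fun σ => by rw [zbasis, contractIter_single, one_mul], fun f => ?_⟩
  calc contractIter K d (∑ σ, MonoidAlgebra.single σ (f σ))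
      = ∑ σ, contractIter K d (MonoidAlgebra.single σ (f σ)) :=
        map_sum (AddMonoidHom.mk' (contractIter K d) (contractIter_add d)) _ _
    _ = ∑ σ, MonoidAlgebra.single 1 (f σ * X ^ cycleCount σ) := by
        simp only [contractIter_single]
    _ = _ := (map_sum (MonoidAlgebra.singleAddHom 1) _ _).symm

theorem stmt0 (K : Type) [Field K] [CharZero K] (d : ℕ) :
    (∀ σ : Equiv.Perm (Fin d),
      contractIter K d (zbasis σ) =
        MonoidAlgebra.single (1 : Equiv.Perm (Fin 0)) ((X : Polynomial K) ^ cycleCount σ)) ∧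
    (∀ f : Equiv.Perm (Fin d) → Polynomial K,
      contractIter K d (∑ σ : Equiv.Perm (Fin d), MonoidAlgebra.single σ (f σ)) =
        MonoidAlgebra.single (1 : Equiv.Perm (Fin 0))
          (∑ σ : Equiv.Perm (Fin d), f σ * (X : Polynomial K) ^ cycleCount σ)) :=
  stmt0_general K d
end

section
/- If (I_n)_{n≥0} is a nonzero ideal of 𝒵, i.e. I_d ≠ 0 for some d, then I_0 ≠ 0 (equivalently, the ideal I_0 of K[t] is generated by a nonzero monic polynomial g_∅). -/
open Polynomial

/-!
Left-translating a nonzero `a ∈ I_{n+1}` by a basis element, we may assume that its coefficient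
at `[1]` is nonzero and of maximal degree among its coefficients. The `[1]`-coefficient of `∂a`
is `t·a(1)` plus the coefficients `a(σ)` of the permutations `σ ≠ 1` with `reduceLast σ = 1`,
none of which fixes the last point; so it has degree `deg a(1) + 1`, and `∂a ≠ 0`.
Descending in `n` gives `I_0 ≠ 0`, and `I_0` is then a nonzero ideal of the principal ideal
domain `K[t]`, generated by its normalized (monic) generator.
-/

lemma Equiv.optionCongr_removeNone_of_apply_none {α : Type*} {e : Equiv.Perm (Option α)}
    (h : e none = none) : (Equiv.removeNone e).optionCongr = e := by
  ext1 x
  rcases x with _ | x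
  · simp [h]
  · obtain ⟨y, hy⟩ := Option.ne_none_iff_exists'.mp
      fun hx => Option.some_ne_none x (e.injective (hx.trans h.symm))
    simp [Equiv.removeNone_some e ⟨y, hy⟩]

lemma reduceLast_one {n : ℕ} : reduceLast (1 : Equiv.Perm (Fin (n + 1))) = 1 := by
  change Equiv.removeNone (finSuccEquivLast.permCongr (Equiv.refl _)) = Equiv.refl _
  rw [Equiv.permCongr_refl, ← Equiv.optionCongr_refl, Equiv.removeNone_optionCongr]

lemma eq_one_of_reduceLast_eq_one {n : ℕ} {σ : Equiv.Perm (Fin (n + 1))}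
    (hσ : σ (Fin.last n) = Fin.last n) (h : reduceLast σ = 1) : σ = 1 := by
  apply finSuccEquivLast.permCongr.injective
  rw [← Equiv.optionCongr_removeNone_of_apply_none
    (e := finSuccEquivLast.permCongr σ) (by simp [hσ])]
  change (reduceLast σ).optionCongr = _
  rw [h]
  ext1 x
  simp

section DegreeDominant

variable {R G : Type*} [Semiring R]

def IsDegreeDominantAtOne [One G] (b : MonoidAlgebra R[X] G) : Prop :=
  b.coeff 1 ≠ 0 ∧ ∀ g, (b.coeff g).degree ≤ (b.coeff 1).degree

lemma exists_isDegreeDominantAtOne_single_mul [Group G] {a : MonoidAlgebra R[X] G} (ha : a ≠ 0) :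
    ∃ g : G, IsDegreeDominantAtOne (MonoidAlgebra.single g 1 * a) := by
  obtain ⟨g₀, hg₀, hmax⟩ := a.coeff.support.exists_max_image (fun g => (a.coeff g).degree)
    (Finsupp.support_nonempty_iff.mpr (mt MonoidAlgebra.coeff_eq_zero.mp ha))
  refine ⟨g₀⁻¹, ?_, fun g => ?_⟩ <;>
    simp only [MonoidAlgebra.coeff_single_mul_apply, inv_inv, one_mul, mul_one]
  · exact Finsupp.mem_support_iff.mp hg₀
  · by_cases hg : a.coeff (g₀ * g) = 0
    · simp [hg]
    · exact hmax _ (Finsupp.mem_support_iff.mpr hg)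

end DegreeDominant

section Contraction

variable {K : Type} [Field K] {n : ℕ}

lemma coeff_contractZ (a : Zn K (n + 1)) (ρ : Equiv.Perm (Fin n)) :
    (contractZ a).coeff ρ = ∑ σ, if reduceLast σ = ρ then
      (if σ (Fin.last n) = Fin.last n then (X : K[X]) else 1) * a.coeff σ else 0 := by
  rw [contractZ, MonoidAlgebra.coeff_finsuppSum, Finsupp.sum_apply,
    Finsupp.sum_fintype _ _ (by simp)]
  simp only [MonoidAlgebra.coeff_single, Finsupp.single_apply]

lemma coeff_one_contractZ_ne_zero {b : Zn K (n + 1)} (hb : IsDegreeDominantAtOne b) :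
    (contractZ b).coeff 1 ≠ 0 := by
  classical
  obtain ⟨hb₁, hdeg⟩ := hb
  rw [coeff_contractZ, Fintype.sum_eq_add_sum_compl 1]
  simp only [reduceLast_one, Equiv.Perm.one_apply, if_true]
  have hlt : (b.coeff 1).degree < (X * b.coeff 1).degree := by
    rw [mul_comm]; exact degree_lt_degree_mul_X hb₁
  refine ne_zero_of_degree_gt (n := (b.coeff 1).degree) ?_
  rw [degree_add_eq_left_of_degree_lt (lt_of_le_of_lt ?_ hlt)]
  · exact hlt
  refine (degree_sum_le _ _).trans (Finset.sup_le fun σ hσ => ?_)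
  split_ifs with hr hfix
  · exact absurd (eq_one_of_reduceLast_eq_one hfix hr) (by simpa using hσ)
  · rw [one_mul]; exact hdeg σ
  · simp

end Contraction

lemma Zn.eq_single_coeff_one {K : Type} [Field K] (a : Zn K 0) :
    a = MonoidAlgebra.single 1 (a.coeff 1) := by
  ext1; ext1
  simp [Subsingleton.elim default (1 : Equiv.Perm (Fin 0))]

namespace ZIdeal

variable {K : Type} [Field K] (I : ZIdeal K)

lemma exists_ne_zero_of_succ {n : ℕ} (h : ∃ a ∈ I.carrier (n + 1), a ≠ 0) :
    ∃ a ∈ I.carrier n, a ≠ 0 := by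
  obtain ⟨a, haI, ha⟩ := h
  obtain ⟨σ, hσ⟩ := exists_isDegreeDominantAtOne_single_mul ha
  exact ⟨_, I.contract_mem n _ (I.mul_mem_left _ _ a haI),
    fun h0 => coeff_one_contractZ_ne_zero hσ (by rw [h0]; rfl)⟩

lemma exists_ne_zero_carrier_zero (h : I.Nonzero) : ∃ a ∈ I.carrier 0, a ≠ 0 := by
  obtain ⟨d, hd⟩ := h
  induction d with
  | zero => exact hd
  | succ n ih => exact ih (I.exists_ne_zero_of_succ hd)

def idealZero : Ideal K[X] where
  carrier := {f | MonoidAlgebra.single 1 f ∈ I.carrier 0}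
  zero_mem' := by simpa using I.zero_mem 0
  add_mem' {f g} hf hg := by simpa using I.add_mem 0 _ _ hf hg
  smul_mem' c f hf := by simpa using I.mul_mem_left 0 (MonoidAlgebra.single 1 c) _ hf

lemma mem_idealZero {f : K[X]} : f ∈ I.idealZero ↔ MonoidAlgebra.single 1 f ∈ I.carrier 0 :=
  Iff.rfl

lemma idealZero_ne_bot (h : I.Nonzero) : I.idealZero ≠ ⊥ := by
  obtain ⟨a, haI, ha⟩ := I.exists_ne_zero_carrier_zero h
  rw [Zn.eq_single_coeff_one a] at haI ha
  rw [Ne, Submodule.eq_bot_iff, not_forall]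
  exact ⟨a.coeff 1, fun h0 => ha (by rw [h0 (I.mem_idealZero.mpr haI)]; simp)⟩

end ZIdeal

theorem stmt5_general (K : Type) [Field K] (I : ZIdeal K) (h : I.Nonzero) :
    (∃ a ∈ I.carrier 0, a ≠ 0) ∧
    ∃ g : Polynomial K, g.Monic ∧
      ∀ f : Polynomial K,
        MonoidAlgebra.single (1 : Equiv.Perm (Fin 0)) f ∈ I.carrier 0 ↔ g ∣ f := by
  classical
  open Submodule.IsPrincipal in
  refine ⟨I.exists_ne_zero_carrier_zero h, normalize (generator I.idealZero),
    monic_normalize ((eq_bot_iff_generator_eq_zero _).not.mp (I.idealZero_ne_bot h)),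
    fun f => ?_⟩
  rw [normalize_dvd_iff, ← mem_iff_generator_dvd, I.mem_idealZero]

theorem stmt5 (K : Type) [Field K] [CharZero K] (I : ZIdeal K) (h : I.Nonzero) :
    (∃ a ∈ I.carrier 0, a ≠ 0) ∧
    ∃ g : Polynomial K, g.Monic ∧
      ∀ f : Polynomial K,
        MonoidAlgebra.single (1 : Equiv.Perm (Fin 0)) f ∈ I.carrier 0 ↔ g ∣ f :=
  stmt5_general K I h
end

section
/- Let {g_λ} be a compatible collection of monic polynomials. Say a partition λ has an (i,j)-jump if (i,j) is a removable box of λ (i.e. (i,j) ∈ λ and λ with the box (i,j) removed is again a partition) and g_λ ≠ g_{λ∖(i,j)}. If (i,j) is a removable box of both partitions λ₁ and λ₂, then λ₁ has an (i,j)-jump if and only if λ₂ has an (i,j)-jump. -/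
open Polynomial

/-- A collection of monic polynomials indexed by all partitions is *compatible* if,
whenever `ν` is obtained from `μ` by adding a single box in row `i`, column `j`,
either `g μ = g ν` or `g μ = (t + j − i) · g ν`. -/
def Compatible (K : Type) [Field K] (g : YoungDiagram → Polynomial K) : Prop :=
  (∀ μ : YoungDiagram, (g μ).Monic) ∧
  ∀ (μ ν : YoungDiagram) (i j : ℕ), (i, j) ∉ μ → ν.cells = insert (i, j) μ.cells →
    (g μ = g ν ∨ g μ = ((X : Polynomial K) + (j : Polynomial K) - (i : Polynomial K)) * g ν)
/-!
The factor `t + j − i` picked up along the edge that adds box `(i, j)` has the root `i − j`,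
the content of the box. Hence, writing `m(λ)` for the multiplicity of the root `i − j` in
`g_λ`, the box `(i, j)` is a jump of `λ` exactly when `m(λ ∖ (i, j)) ≠ m(λ)`, and `m` does not
change along edges whose box has another content. Every box of `λ₁` outside `λ₁ ⊓ λ₂` is
incomparable with the removable box `(i, j)`, so its content differs from `i − j`; removing
such boxes one at a time shows `m(λ₁) = m(λ₁ ⊓ λ₂)` and `m(ν₁) = m(ν₁ ⊓ ν₂)`, and the
criterion becomes symmetric in the two partitions.
-/

namespace YoungDiagram

variable {μ ν : YoungDiagram} {b c : ℕ × ℕ}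

theorem mem_of_cells_eq_erase (h : ν.cells = μ.cells.erase b) : c ∈ ν ↔ c ≠ b ∧ c ∈ μ := by
  rw [← mem_cells, h, Finset.mem_erase, mem_cells]

theorem eq_of_le_of_cells_eq_erase (h : ν.cells = μ.cells.erase b) (hc : c ∈ μ) (hbc : b ≤ c) :
    c = b := by
  by_contra hcb
  have hbν : b ∈ ν := ν.isLowerSet hbc ((mem_of_cells_eq_erase h).2 ⟨hcb, hc⟩)
  exact ((mem_of_cells_eq_erase h).1 hbν).1 rfl

/-- Any maximal box of `lam` outside `μ` will do. -/
theorem exists_cells_eq_erase_of_lt {lam : YoungDiagram} (h : μ < lam) :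
    ∃ c ∈ lam, c ∉ μ ∧ ∃ ν : YoungDiagram, ν.cells = lam.cells.erase c ∧ μ ≤ ν := by
  obtain ⟨c, hc⟩ := Finset.exists_maximal
    (Finset.sdiff_nonempty.2 (not_subset_of_ssubset (cells_ssubset_iff.2 h)))
  obtain ⟨hcl, hcμ⟩ := Finset.mem_sdiff.1 hc.prop
  have hcmax : ∀ x ∈ lam, c ≤ x → x = c := fun x hx hcx =>
    (hc.eq_of_le (Finset.mem_sdiff.2 ⟨(mem_cells x).2 hx,
      fun hxμ => hcμ ((mem_cells c).2 (μ.isLowerSet hcx ((mem_cells x).1 hxμ)))⟩) hcx).symm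
  refine ⟨c, (mem_cells c).1 hcl, fun h' => hcμ ((mem_cells c).2 h'),
    ⟨lam.cells.erase c, ?_⟩, rfl, fun x hx => ?_⟩
  · intro x y hyx hx
    rw [Finset.mem_coe, Finset.mem_erase] at hx ⊢
    exact ⟨fun hyc => hx.1 (hcmax x hx.2 (hyc ▸ hyx)), lam.isLowerSet hyx hx.2⟩
  · exact Finset.mem_erase.2 ⟨fun hxc => hcμ (hxc ▸ (mem_cells x).2 hx),
      cells_subset_iff.2 h.le ((mem_cells x).2 hx)⟩

end YoungDiagram

theorem Prod.le_or_le_of_cast_sub_eq {R : Type*} [AddCommGroupWithOne R] [CharZero R]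
    {b c : ℕ × ℕ} (h : (c.1 : R) - c.2 = b.1 - b.2) : c ≤ b ∨ b ≤ c := by
  have hsum : c.1 + b.2 = b.1 + c.2 := by
    exact_mod_cast (sub_eq_sub_iff_add_eq_add.1 h : (c.1 : R) + b.2 = b.1 + c.2)
  simp only [Prod.le_def]
  omega

theorem YoungDiagram.cast_sub_ne_of_cells_eq_erase {R : Type*} [AddCommGroupWithOne R]
    [CharZero R]
    {lam lam' ν : YoungDiagram} {b c : ℕ × ℕ} (hν : ν.cells = lam.cells.erase b)
    (hb' : b ∈ lam') (hc : c ∈ lam) (hc' : c ∉ lam') : (c.1 : R) - c.2 ≠ b.1 - b.2 := by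
  intro h
  rcases Prod.le_or_le_of_cast_sub_eq h with hcb | hbc
  · exact hc' (lam'.isLowerSet hcb hb')
  · exact hc' (eq_of_le_of_cells_eq_erase hν hc hbc ▸ hb')

theorem Polynomial.rootMultiplicity_X_sub_C_mul {R : Type*} [CommRing R] [IsDomain R]
    [DecidableEq R] {p : R[X]} (hp : p ≠ 0) (a b : R) :
    rootMultiplicity a ((X - C b) * p) = (if a = b then 1 else 0) + rootMultiplicity a p := by
  rw [rootMultiplicity_mul (mul_ne_zero (X_sub_C_ne_zero b) hp), rootMultiplicity_X_sub_C]

namespace Compatible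

variable {K : Type} [Field K] {g : YoungDiagram → Polynomial K} (hg : Compatible K g)
  {lam ν : YoungDiagram} {i j : ℕ}
include hg

theorem eq_or_eq_X_sub_C_mul (hij : (i, j) ∈ lam) (hν : ν.cells = lam.cells.erase (i, j)) :
    g ν = g lam ∨ g ν = (X - C ((i : K) - j)) * g lam := by
  have hX : (X : K[X]) + (j : K[X]) - (i : K[X]) = X - C ((i : K) - j) := by
    simp only [map_sub, map_natCast]
    ring
  rw [← hX]
  refine hg.2 ν lam i j (fun h => ?_) ?_
  · exact ((YoungDiagram.mem_of_cells_eq_erase hν).1 h).1 rfl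
  · rw [hν, Finset.insert_erase ((YoungDiagram.mem_cells _).2 hij)]

theorem rootMultiplicity_eq_of_ne (hij : (i, j) ∈ lam) (hν : ν.cells = lam.cells.erase (i, j))
    {a : K} (ha : a ≠ i - j) : rootMultiplicity a (g ν) = rootMultiplicity a (g lam) := by
  classical
  rcases hg.eq_or_eq_X_sub_C_mul hij hν with h | h
  · rw [h]
  · rw [h, rootMultiplicity_X_sub_C_mul (hg.1 lam).ne_zero, if_neg ha, zero_add]

theorem ne_iff_rootMultiplicity_ne (hij : (i, j) ∈ lam)
    (hν : ν.cells = lam.cells.erase (i, j)) :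
    g lam ≠ g ν ↔
      rootMultiplicity ((i : K) - j) (g lam) ≠ rootMultiplicity ((i : K) - j) (g ν) := by
  classical
  refine ⟨fun hne => ?_, fun hne h => hne (h ▸ rfl)⟩
  rcases hg.eq_or_eq_X_sub_C_mul hij hν with h | h
  · exact absurd h.symm hne
  · rw [h, rootMultiplicity_X_sub_C_mul (hg.1 lam).ne_zero, if_pos rfl]
    omega

theorem rootMultiplicity_eq_of_le {μ : YoungDiagram} (hle : μ ≤ lam) {a : K}
    (ha : ∀ c ∈ lam, c ∉ μ → (c.1 : K) - c.2 ≠ a) :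
    rootMultiplicity a (g μ) = rootMultiplicity a (g lam) := by
  induction hn : lam.cells.card using Nat.strong_induction_on generalizing lam with
  | _ n ih =>
  rcases hle.eq_or_lt with rfl | hlt
  · rfl
  obtain ⟨⟨i', j'⟩, hc, hcμ, ν, hν, hμν⟩ := YoungDiagram.exists_cells_eq_erase_of_lt hlt
  have hcard : ν.cells.card < n := by
    rw [← hn, hν]
    exact Finset.card_erase_lt_of_mem ((YoungDiagram.mem_cells _).2 hc)
  have hνlam : ∀ {d}, d ∈ ν → d ∈ lam := fun hd =>
    ((YoungDiagram.mem_of_cells_eq_erase hν).1 hd).2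
  rw [ih _ hcard hμν (fun d hd => ha d (hνlam hd)) rfl,
    hg.rootMultiplicity_eq_of_ne hc hν (ha _ hc hcμ).symm]

variable [CharZero K]

theorem ne_iff_rootMultiplicity_inf_ne {lam' ν' : YoungDiagram} (hij : (i, j) ∈ lam)
    (hij' : (i, j) ∈ lam') (hν : ν.cells = lam.cells.erase (i, j))
    (hν' : ν'.cells = lam'.cells.erase (i, j)) :
    g lam ≠ g ν ↔ rootMultiplicity ((i : K) - j) (g (lam ⊓ lam')) ≠
      rootMultiplicity ((i : K) - j) (g (ν ⊓ ν')) := by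
  have hlam : ∀ c ∈ lam, c ∉ lam ⊓ lam' → (c.1 : K) - c.2 ≠ i - j := fun c hc hc' =>
    YoungDiagram.cast_sub_ne_of_cells_eq_erase hν hij' hc
      fun hcl' => hc' (YoungDiagram.mem_inf.2 ⟨hc, hcl'⟩)
  have hnu : ∀ c ∈ ν, c ∉ ν ⊓ ν' → (c.1 : K) - c.2 ≠ i - j := by
    intro c hc hc'
    obtain ⟨hcij, hcl⟩ := (YoungDiagram.mem_of_cells_eq_erase hν).1 hc
    refine YoungDiagram.cast_sub_ne_of_cells_eq_erase hν hij' hcl fun hcl' => hc' ?_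
    exact YoungDiagram.mem_inf.2 ⟨hc, (YoungDiagram.mem_of_cells_eq_erase hν').2 ⟨hcij, hcl'⟩⟩
  rw [hg.ne_iff_rootMultiplicity_ne hij hν, hg.rootMultiplicity_eq_of_le inf_le_left hlam,
    hg.rootMultiplicity_eq_of_le inf_le_left hnu]

end Compatible

theorem stmt8 (K : Type) [Field K] [CharZero K] (g : YoungDiagram → Polynomial K)
    (hg : Compatible K g) (lam1 lam2 nu1 nu2 : YoungDiagram) (i j : ℕ)
    (h1 : (i, j) ∈ lam1) (h2 : (i, j) ∈ lam2)
    (hn1 : nu1.cells = lam1.cells.erase (i, j))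
    (hn2 : nu2.cells = lam2.cells.erase (i, j)) :
    (g lam1 ≠ g nu1 ↔ g lam2 ≠ g nu2) := by
  rw [hg.ne_iff_rootMultiplicity_inf_ne h1 h2 hn1 hn2,
    hg.ne_iff_rootMultiplicity_inf_ne h2 h1 hn2 hn1, inf_comm lam2, inf_comm nu2]
end
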